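/- arXiv:2505.12779 — 5 statements merged into one kernel-verified Lean document; each statement's English description precedes it below -/
import Mathlib

section
/- Let M be a K{φ,ρ}-module. Then the set M_{tor,φ} of φ-torsion elements of M is a K-subspace of M which is closed under both F and S (i.e., it is a K{φ,ρ}-submodule of M), and the same holds for the set M_{tor,ρ} of ρ-torsion elements. -/
/-!
Being `f`-torsion means that the iterates `f^[i] m` are linearly dependent. For semilinear `f`
this holds exactly when `m` lies in a finite-dimensional `f`-stable subspace: if `f^[n] m` is a
combination of the earlier iterates, their span is `f`-stable, and conversely infinitely many
iterates cannot be independent in a finite-dimensional space. Such subspaces are closed under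
sums, which gives additivity. A commuting semilinear `g` turns a relation `∑ cᵢ • f^[i] m = 0`
into `∑ τ cᵢ • f^[i] (g m) = 0`, still nontrivial because field homomorphisms are injective.
-/

open Set Submodule

theorem LinearIndependent.of_comp_semilinearMap {ι R R₂ M M₂ : Type*} [Semiring R] [Semiring R₂]
    [AddCommMonoid M] [AddCommMonoid M₂] [Module R M] [Module R₂ M₂] {σ : R →+* R₂}
    (hσ : Function.Injective σ) (g : M →ₛₗ[σ] M₂) {v : ι → M}
    (hv : LinearIndependent R₂ (g ∘ v)) : LinearIndependent R v := by
  have hcomb : ∀ l : ι →₀ R, Finsupp.linearCombination R₂ (g ∘ v) (l.mapRange σ σ.map_zero) =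
      g (Finsupp.linearCombination R v l) := fun l => by
    simp [Finsupp.linearCombination_apply, Finsupp.sum_mapRange_index, map_finsuppSum]
  intro l₁ l₂ h
  apply Finsupp.mapRange_injective σ σ.map_zero hσ
  exact hv (by simp only [hcomb, h])

theorem exists_mem_span_image_Iio_of_not_linearIndependent {K V : Type*} [DivisionRing K]
    [AddCommGroup V] [Module K V] {v : ℕ → V} (h : ¬LinearIndependent K v) :
    ∃ n, v n ∈ span K (v '' Iio n) := by
  classical
  obtain ⟨c, hc, hc0⟩ := not_linearIndependent_iff_finsupp.1 h
  have hne : c.support.Nonempty := Finsupp.support_nonempty_iff.2 hc0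
  set n := c.support.max' hne
  have hn : n ∈ c.support := c.support.max'_mem hne
  refine ⟨n, (smul_mem_iff _ (Finsupp.mem_support_iff.1 hn)).1 ?_⟩
  have hsplit : c n • v n = -∑ i ∈ c.support.erase n, c i • v i := by
    rw [eq_neg_iff_add_eq_zero, Finset.add_sum_erase _ (fun i => c i • v i) hn]
    exact hc
  rw [hsplit]
  refine neg_mem (sum_mem fun i hi => smul_mem _ _ (subset_span ⟨i, ?_, rfl⟩))
  exact (c.support.le_max' i (Finset.mem_of_mem_erase hi)).lt_of_ne (Finset.ne_of_mem_erase hi)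

section Semilinear

variable {K M : Type*} [Semiring K] [AddCommMonoid M] [Module K M] {σ : K →+* K}

theorem mapsTo_span_image_iterate_Iio (f : M →ₛₗ[σ] M) {m : M} {n : ℕ}
    (hn : f^[n] m ∈ span K ((f^[·] m) '' Iio n)) :
    MapsTo f (span K ((f^[·] m) '' Iio n)) (span K ((f^[·] m) '' Iio n)) := by
  set W := span K ((f^[·] m) '' Iio n)
  suffices W ≤ W.comap f from fun w hw => this hw
  refine span_le.2 ?_
  rintro _ ⟨i, hi, rfl⟩
  show f (f^[i] m) ∈ W
  rw [← Function.iterate_succ_apply' f i m]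
  rcases (Nat.succ_le_of_lt hi).lt_or_eq with hlt | heq
  · exact subset_span ⟨i + 1, hlt, rfl⟩
  · rwa [heq]

theorem mapsTo_sup {f : M →ₛₗ[σ] M} {W₁ W₂ : Submodule K M} (h₁ : MapsTo f W₁ W₁)
    (h₂ : MapsTo f W₂ W₂) : MapsTo f ↑(W₁ ⊔ W₂) ↑(W₁ ⊔ W₂) :=
  show W₁ ⊔ W₂ ≤ (W₁ ⊔ W₂).comap f from
    sup_le ((show W₁ ≤ W₁.comap f from h₁).trans (comap_mono le_sup_left))
      ((show W₂ ≤ W₂.comap f from h₂).trans (comap_mono le_sup_right))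

end Semilinear

variable (K : Type*) {M : Type*} [Field K] [AddCommGroup M] [Module K M]

def IsTorsionUnder (f : M → M) (m : M) : Prop :=
  ¬LinearIndependent K fun i : ℕ => f^[i] m

variable {K}

theorem isTorsionUnder_iff_exists_relation {f : M → M} {m : M} :
    IsTorsionUnder K f m ↔ ∃ c : ℕ →₀ K, c ≠ 0 ∧ (c.sum fun i x => x • f^[i] m) = 0 := by
  simp only [IsTorsionUnder, not_linearIndependent_iff_finsupp, and_comm]

theorem isTorsionUnder_zero {f : M → M} (hf : f 0 = 0) : IsTorsionUnder K f 0 :=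
  fun hli => hli.ne_zero 0 (Function.iterate_fixed hf 0)

theorem isTorsionUnder_of_mapsTo {f : M → M} {m : M} (W : Submodule K M) [FiniteDimensional K W]
    (hW : MapsTo f W W) (hm : m ∈ W) : IsTorsionUnder K f m := fun hli =>
  Module.Finite.not_linearIndependent_of_infinite (R := K)
    (fun i : ℕ => (⟨f^[i] m, hW.iterate i hm⟩ : W)) (.of_comp W.subtype hli)

theorem IsTorsionUnder.map {f : M → M} {τ : K →+* K} (g : M →ₛₗ[τ] M)
    (hfg : Function.Commute f g) {m : M} (hm : IsTorsionUnder K f m) :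
    IsTorsionUnder K f (g m) := by
  refine fun hli => hm (.of_comp_semilinearMap τ.injective g ?_)
  convert hli using 1
  exact funext fun i => ((hfg.iterate_left i).eq m).symm

variable {σ : K →+* K} {f : M →ₛₗ[σ] M}

theorem IsTorsionUnder.exists_finiteDimensional {m : M} (hm : IsTorsionUnder K f m) :
    ∃ W : Submodule K M, FiniteDimensional K W ∧ MapsTo f W W ∧ m ∈ W := by
  obtain ⟨n, hn⟩ := exists_mem_span_image_Iio_of_not_linearIndependent hm
  refine ⟨_, .span_of_finite K ((finite_Iio n).image _), mapsTo_span_image_iterate_Iio f hn, ?_⟩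
  rcases n.eq_zero_or_pos with rfl | hpos
  · simpa using hn
  · exact subset_span ⟨0, hpos, rfl⟩

theorem IsTorsionUnder.add {m₁ m₂ : M} (h₁ : IsTorsionUnder K f m₁)
    (h₂ : IsTorsionUnder K f m₂) : IsTorsionUnder K f (m₁ + m₂) := by
  obtain ⟨W₁, _, hW₁, hm₁⟩ := h₁.exists_finiteDimensional
  obtain ⟨W₂, _, hW₂, hm₂⟩ := h₂.exists_finiteDimensional
  exact isTorsionUnder_of_mapsTo (W₁ ⊔ W₂) (mapsTo_sup hW₁ hW₂)
    (add_mem (mem_sup_left hm₁) (mem_sup_right hm₂))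

theorem IsTorsionUnder.smul {m : M} (hm : IsTorsionUnder K f m) (x : K) :
    IsTorsionUnder K f (x • m) := by
  obtain ⟨W, _, hW, hmW⟩ := hm.exists_finiteDimensional
  exact isTorsionUnder_of_mapsTo W hW (W.smul_mem x hmW)

variable (f) in
def torsionSubmodule : Submodule K M where
  carrier := {m | IsTorsionUnder K f m}
  zero_mem' := isTorsionUnder_zero f.map_zero
  add_mem' := IsTorsionUnder.add
  smul_mem' x _ hm := IsTorsionUnder.smul hm x

theorem torsion_sets_are_submodules_general
    {K : Type} [Field K] (γφ γρ : K →+* K)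
    {M : Type} [AddCommGroup M] [Module K M]
    (F S : M →+ M)
    (hF : ∀ (x : K) (m : M), F (x • m) = γφ x • F m)
    (hS : ∀ (x : K) (m : M), S (x • m) = γρ x • S m)
    (hFS : ∀ m : M, F (S m) = S (F m)) :
    (∃ N : Submodule K M,
        (N : Set M) =
          {m : M | ∃ c : ℕ →₀ K, c ≠ 0 ∧ (c.sum fun i x => x • F^[i] m) = 0} ∧
        (∀ m ∈ N, F m ∈ N) ∧ (∀ m ∈ N, S m ∈ N)) ∧
    (∃ N : Submodule K M,
        (N : Set M) =
          {m : M | ∃ c : ℕ →₀ K, c ≠ 0 ∧ (c.sum fun i x => x • S^[i] m) = 0} ∧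
        (∀ m ∈ N, F m ∈ N) ∧ (∀ m ∈ N, S m ∈ N)) := by
  let F' : M →ₛₗ[γφ] M := { F with map_smul' := hF }
  let S' : M →ₛₗ[γρ] M := { S with map_smul' := hS }
  have hSF : Function.Commute S F := fun m => (hFS m).symm
  refine ⟨⟨torsionSubmodule F', Set.ext fun _ => isTorsionUnder_iff_exists_relation, ?_, ?_⟩,
    ⟨torsionSubmodule S', Set.ext fun _ => isTorsionUnder_iff_exists_relation, ?_, ?_⟩⟩
  · exact fun m hm => IsTorsionUnder.map F' (Function.Commute.refl _) hm
  · exact fun m hm => IsTorsionUnder.map S' hFS hm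
  · exact fun m hm => IsTorsionUnder.map F' hSF hm
  · exact fun m hm => IsTorsionUnder.map S' (Function.Commute.refl _) hm

theorem torsion_sets_are_submodules
    {K : Type} [Field K] (γφ γρ : K →+* K)
    (hcomm : ∀ x : K, γφ (γρ x) = γρ (γφ x))
    {M : Type} [AddCommGroup M] [Module K M]
    (F S : M →+ M)
    (hF : ∀ (x : K) (m : M), F (x • m) = γφ x • F m)
    (hS : ∀ (x : K) (m : M), S (x • m) = γρ x • S m)
    (hFS : ∀ m : M, F (S m) = S (F m)) :
    (∃ N : Submodule K M,
        (N : Set M) =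
          {m : M | ∃ c : ℕ →₀ K, c ≠ 0 ∧ (c.sum fun i x => x • F^[i] m) = 0} ∧
        (∀ m ∈ N, F m ∈ N) ∧ (∀ m ∈ N, S m ∈ N)) ∧
    (∃ N : Submodule K M,
        (N : Set M) =
          {m : M | ∃ c : ℕ →₀ K, c ≠ 0 ∧ (c.sum fun i x => x • S^[i] m) = 0} ∧
        (∀ m ∈ N, F m ∈ N) ∧ (∀ m ∈ N, S m ∈ N)) :=
  torsion_sets_are_submodules_general γφ γρ F S hF hS hFS
end

section
/- Let M be a K{φ,ρ}-module. If M is finitely generated as K⟨ρ⟩-module, then the set M_{tor,ρ} of ρ-torsion elements is a finite-dimensional K-subspace of M. -/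
open Submodule

section Tor
variable {K : Type} [Field K] (σ : K →+* K)
variable {M : Type} [AddCommGroup M] [Module K M]

lemma iter_map_add (S : M →ₛₗ[σ] M) (k : ℕ) (a b : M) :
    S^[k] (a + b) = S^[k] a + S^[k] b := by
  induction k generalizing a b with
  | zero => rfl
  | succ k ih => rw [Function.iterate_succ_apply, map_add, ih,
      ← Function.iterate_succ_apply, ← Function.iterate_succ_apply]

lemma iter_map_zero (S : M →ₛₗ[σ] M) (k : ℕ) : S^[k] (0 : M) = 0 := by
  induction k with
  | zero => rfl
  | succ k ih => rw [Function.iterate_succ_apply, map_zero, ih]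

lemma iter_map_smul (S : M →ₛₗ[σ] M) (k : ℕ) (x : K) (m : M) :
    S^[k] (x • m) = σ^[k] x • S^[k] m := by
  induction k generalizing x m with
  | zero => rfl
  | succ k ih =>
      rw [Function.iterate_succ_apply, Function.iterate_succ_apply,
        Function.iterate_succ_apply, map_smulₛₗ, ih]

lemma iter_map_finsetsum {ι : Type*} (S : M →ₛₗ[σ] M) (k : ℕ) (s : Finset ι) (f : ι → M) :
    S^[k] (∑ i ∈ s, f i) = ∑ i ∈ s, S^[k] (f i) := by
  induction k with
  | zero => rfl
  | succ k ih =>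
      rw [Function.iterate_succ_apply', ih, map_sum]
      exact Finset.sum_congr rfl fun i _ => (Function.iterate_succ_apply' _ _ _).symm

lemma iter_map_sum (S : M →ₛₗ[σ] M) (k : ℕ) (c : ℕ →₀ K) (f : ℕ → K → M) :
    S^[k] (c.sum f) = c.sum fun i x => S^[k] (f i x) :=
  iter_map_finsetsum σ S k _ _

lemma sigma_iter_ne_zero (k : ℕ) {x : K} (hx : x ≠ 0) : (⇑σ)^[k] x ≠ 0 := by
  induction k generalizing x hx with
  | zero => exact hx
  | succ k ih =>
      rw [Function.iterate_succ_apply]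
      exact ih (fun h => hx (σ.injective (by simpa using h)))

/-- The torsion predicate. -/
def IsTor (S : M →ₛₗ[σ] M) (m : M) : Prop :=
  ∃ c : ℕ →₀ K, c ≠ 0 ∧ (c.sum fun i x => x • S^[i] m) = 0

/-- The `K`-span of the `S`-orbit of `m`. -/
def orb (S : M →ₛₗ[σ] M) (m : M) : Submodule K M :=
  span K (Set.range fun l => S^[l] m)

lemma sum_eq_lc (S : M →ₛₗ[σ] M) (m : M) (c : ℕ →₀ K) :
    (c.sum fun i x => x • S^[i] m) = Finsupp.linearCombination K (fun i => S^[i] m) c :=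
  (Finsupp.linearCombination_apply _ _).symm

lemma li_of_not_istor (S : M →ₛₗ[σ] M) (m : M) (h : ¬ IsTor σ S m) :
    LinearIndependent K (fun l : ℕ => S^[l] m) := by
  rw [linearIndependent_iff]
  intro c hc
  by_contra hc0
  exact h ⟨c, hc0, by rw [sum_eq_lc]; exact hc⟩

lemma istor_of_fd (S : M →ₛₗ[σ] M) (m : M) (h : FiniteDimensional K (orb σ S m)) :
    IsTor σ S m := by
  by_contra hni
  have li := li_of_not_istor σ S m hni
  have hmem : ∀ l : ℕ, S^[l] m ∈ orb σ S m := fun l => subset_span ⟨l, rfl⟩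
  let u : ℕ → orb σ S m := fun l => ⟨S^[l] m, hmem l⟩
  have liu : LinearIndependent K u := by
    apply LinearIndependent.of_comp (orb σ S m).subtype
    exact li
  have card := (liu.comp (Fin.val : Fin (Module.finrank K (orb σ S m) + 1) → ℕ)
    Fin.val_injective).fintype_card_le_finrank
  simp at card

end Tor
section Tor2
open Submodule
variable {K : Type} [Field K] (σ : K →+* K)
variable {M : Type} [AddCommGroup M] [Module K M]

/-- From a torsion relation, extract a monic one. -/
lemma exists_monic (S : M →ₛₗ[σ] M) (m : M) (h : IsTor σ S m) :
    ∃ (d : ℕ) (c : ℕ →₀ K), (∀ j, d ≤ j → c j = 0) ∧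
      S^[d] m = c.sum fun i x => x • S^[i] m := by
  obtain ⟨c, hc0, hc⟩ := h
  have hsupp : c.support.Nonempty := Finsupp.support_nonempty_iff.mpr hc0
  set d := c.support.max' hsupp with hdd
  have hd : c d ≠ 0 := Finsupp.mem_support_iff.mp (c.support.max'_mem hsupp)
  refine ⟨d, (-(c d)⁻¹) • c.erase d, ?_, ?_⟩
  · intro j hj
    rw [Finsupp.smul_apply]
    rcases eq_or_lt_of_le hj with rfl | hlt
    · rw [Finsupp.erase_same, smul_zero]
    · have hcj : c j = 0 := by
        by_contra hcj
        exact absurd (c.support.le_max' j (Finsupp.mem_support_iff.mpr hcj)) (not_le.mpr hlt)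
      rw [Finsupp.erase_ne (by omega : j ≠ d), hcj, smul_zero]
  · rw [sum_eq_lc] at hc ⊢
    have hsplit : Finsupp.linearCombination K (fun i => S^[i] m) (Finsupp.single d (c d))
        + Finsupp.linearCombination K (fun i => S^[i] m) (c.erase d) = 0 := by
      rw [← map_add, Finsupp.single_add_erase, hc]
    rw [Finsupp.linearCombination_single] at hsplit
    have hL : Finsupp.linearCombination K (fun i => S^[i] m) (c.erase d)
        = -(c d • S^[d] m) := by
      rw [eq_neg_iff_add_eq_zero, add_comm]
      exact hsplit
    rw [map_smul, hL, smul_neg, neg_smul, neg_neg, smul_smul, inv_mul_cancel₀ hd, one_smul]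

/-- conversely a monic relation gives torsion. -/
lemma istor_of_monic (S : M →ₛₗ[σ] M) (m : M) (d : ℕ) (c : ℕ →₀ K)
    (hcs : ∀ j, d ≤ j → c j = 0)
    (hrel : S^[d] m = c.sum fun i x => x • S^[i] m) : IsTor σ S m := by
  refine ⟨Finsupp.single d 1 - c, ?_, ?_⟩
  · intro h0
    have := congrArg (fun f : ℕ →₀ K => f d) h0
    simp [Finsupp.single_eq_same, hcs d le_rfl] at this
  · rw [sum_eq_lc, map_sub, Finsupp.linearCombination_single, one_smul, ← sum_eq_lc, ← hrel,
      sub_self]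

lemma orbit_le_of_monic (S : M →ₛₗ[σ] M) (m : M) (d : ℕ) (c : ℕ →₀ K)
    (hcs : ∀ j, d ≤ j → c j = 0)
    (hrel : S^[d] m = c.sum fun i x => x • S^[i] m) :
    ∀ l, S^[l] m ∈ span K ((fun i => S^[i] m) '' Set.Iio d) := by
  intro l
  induction l using Nat.strong_induction_on with
  | _ l ih =>
    rcases lt_or_ge l d with h | h
    · exact subset_span ⟨l, h, rfl⟩
    · have hld : l = (l - d) + d := (Nat.sub_add_cancel h).symm
      rw [hld, Function.iterate_add_apply, hrel, iter_map_sum]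
      apply Submodule.sum_mem
      intro i hi
      have hcne := Finsupp.mem_support_iff.mp hi
      have hid : i < d := by
        by_contra hge
        exact hcne (hcs i (le_of_not_gt hge))
      show S^[l - d] (c i • S^[i] m) ∈ _
      rw [iter_map_smul, ← Function.iterate_add_apply]
      exact Submodule.smul_mem _ _ (ih ((l - d) + i) (by omega))

lemma fd_of_istor (S : M →ₛₗ[σ] M) (m : M) (h : IsTor σ S m) :
    FiniteDimensional K (orb σ S m) := by
  obtain ⟨d, c, hcs, hrel⟩ := exists_monic σ S m h
  have hle : orb σ S m ≤ span K ((fun i => S^[i] m) '' Set.Iio d) := by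
    rw [orb, span_le]
    rintro _ ⟨l, rfl⟩
    exact orbit_le_of_monic σ S m d c hcs hrel l
  haveI : FiniteDimensional K (span K ((fun i => S^[i] m) '' Set.Iio d)) :=
    FiniteDimensional.span_of_finite K ((Set.finite_Iio d).image _)
  exact Submodule.finiteDimensional_of_le hle

/-- The torsion submodule. -/
def torSub (S : M →ₛₗ[σ] M) : Submodule K M where
  carrier := {m | IsTor σ S m}
  zero_mem' := by
    refine ⟨Finsupp.single 0 1, ?_, ?_⟩
    · intro h0
      have h1 := congrArg (fun f : ℕ →₀ K => f 0) h0
      simp [Finsupp.single_eq_same] at h1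
    · rw [Finsupp.sum_single_index] <;> simp
  add_mem' := by
    intro a b ha hb
    apply istor_of_fd
    haveI := fd_of_istor σ S a ha
    haveI := fd_of_istor σ S b hb
    haveI : FiniteDimensional K ↥(orb σ S a ⊔ orb σ S b) := Submodule.finiteDimensional_sup _ _
    apply Submodule.finiteDimensional_of_le (S₂ := orb σ S a ⊔ orb σ S b)
    rw [orb, span_le]
    rintro _ ⟨l, rfl⟩
    show S^[l] (a + b) ∈ ((orb σ S a ⊔ orb σ S b : Submodule K M) : Set M)
    rw [iter_map_add]
    exact add_mem (mem_sup_left (subset_span ⟨l, rfl⟩)) (mem_sup_right (subset_span ⟨l, rfl⟩))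
  smul_mem' := by
    intro x a ha
    apply istor_of_fd
    haveI := fd_of_istor σ S a ha
    apply Submodule.finiteDimensional_of_le (S₂ := orb σ S a)
    rw [orb, span_le]
    rintro _ ⟨l, rfl⟩
    show S^[l] (x • a) ∈ ((orb σ S a : Submodule K M) : Set M)
    rw [iter_map_smul]
    exact Submodule.smul_mem _ _ (subset_span ⟨l, rfl⟩)

lemma mem_torSub (S : M →ₛₗ[σ] M) (m : M) : m ∈ torSub σ S ↔ IsTor σ S m := ⟨fun h => h, fun h => h⟩

end Tor2
section Tor3
open Submodule
variable {K : Type} [Field K] (σ : K →+* K)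
variable {M : Type} [AddCommGroup M] [Module K M]

lemma orb_stable (S : M →ₛₗ[σ] M) (m : M) : ∀ v ∈ orb σ S m, S v ∈ orb σ S m := by
  intro v hv
  induction hv using Submodule.span_induction with
  | mem x hx =>
      obtain ⟨l, rfl⟩ := hx
      show S (S^[l] m) ∈ orb σ S m
      exact subset_span ⟨l + 1, Function.iterate_succ_apply' _ _ _⟩
  | zero => rw [map_zero]; exact zero_mem _
  | add x y _ _ hx hy => rw [map_add]; exact add_mem hx hy
  | smul x v _ hv => rw [map_smulₛₗ]; exact Submodule.smul_mem _ _ hv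

lemma iter_stable (S : M →ₛₗ[σ] M) (V : Submodule K M) (hV : ∀ v ∈ V, S v ∈ V) (k : ℕ) :
    ∀ v ∈ V, S^[k] v ∈ V := by
  induction k with
  | zero => exact fun v hv => hv
  | succ k ih =>
      intro v hv
      rw [Function.iterate_succ_apply]
      exact ih _ (hV v hv)

/-- The induced semilinear map on the quotient. -/
def Sbar (S : M →ₛₗ[σ] M) (V : Submodule K M) (hV : ∀ v ∈ V, S v ∈ V) :
    M ⧸ V →ₛₗ[σ] M ⧸ V :=
  V.mapQ V S (fun v hv => hV v hv)

lemma sbar_iter (S : M →ₛₗ[σ] M) (V : Submodule K M) (hV : ∀ v ∈ V, S v ∈ V) (k : ℕ) (m : M) :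
    (Sbar σ S V hV)^[k] (V.mkQ m) = V.mkQ (S^[k] m) := by
  induction k generalizing m with
  | zero => rfl
  | succ k ih =>
      rw [Function.iterate_succ_apply, Function.iterate_succ_apply]
      have h1 : Sbar σ S V hV (V.mkQ m) = V.mkQ (S m) := by
        rw [Sbar, Submodule.mkQ_apply, Submodule.mapQ_apply, Submodule.mkQ_apply]
      rw [h1, ih]

lemma istor_mk (S : M →ₛₗ[σ] M) (V : Submodule K M) (hV : ∀ v ∈ V, S v ∈ V) (m : M)
    (h : IsTor σ S m) : IsTor σ (Sbar σ S V hV) (V.mkQ m) := by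
  obtain ⟨c, hc0, hc⟩ := h
  refine ⟨c, hc0, ?_⟩
  have := congrArg V.mkQ hc
  rw [map_zero] at this
  rw [← this, map_finsuppSum]
  refine Finsupp.sum_congr fun i _ => ?_
  rw [map_smul, sbar_iter]

/-- No nonzero torsion element lives in the cyclic module generated by a non-torsion element. -/
lemma istor_orb_eq_zero (S : M →ₛₗ[σ] M) (g : M) (hg : ¬ IsTor σ S g) (v : M)
    (hv : v ∈ orb σ S g) (htv : IsTor σ S v) : v = 0 := by
  have li : LinearIndependent K (fun l : ℕ => S^[l] g) := li_of_not_istor σ S g hg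
  obtain ⟨a, ha⟩ := Finsupp.mem_span_range_iff_exists_finsupp.mp hv
  by_contra hv0
  have ha0 : a ≠ 0 := by
    rintro rfl
    rw [Finsupp.sum_zero_index] at ha
    exact hv0 ha.symm
  obtain ⟨c, hc0, hc⟩ := htv
  have hcsupp : c.support.Nonempty := Finsupp.support_nonempty_iff.mpr hc0
  have hasupp : a.support.Nonempty := Finsupp.support_nonempty_iff.mpr ha0
  set d := c.support.max' hcsupp with hdd
  set e := a.support.max' hasupp with hee
  have hd : c d ≠ 0 := Finsupp.mem_support_iff.mp (c.support.max'_mem hcsupp)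
  have he : a e ≠ 0 := Finsupp.mem_support_iff.mp (a.support.max'_mem hasupp)
  set L := Finsupp.linearCombination K (fun k : ℕ => S^[k] g) with hL
  set b : ℕ →₀ K := c.sum fun j y => a.sum fun l x => Finsupp.single (j + l) (y * σ^[j] x)
    with hb
  have hLb : L b = 0 := by
    rw [hb, map_finsuppSum]
    rw [← hc]
    refine Finsupp.sum_congr fun j _ => ?_
    rw [map_finsuppSum]
    have hSj : S^[j] v = a.sum fun l x => σ^[j] x • S^[j + l] g := by
      rw [← ha, iter_map_sum]
      refine Finsupp.sum_congr fun l _ => ?_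
      rw [iter_map_smul, ← Function.iterate_add_apply]
    rw [hSj, Finsupp.smul_sum]
    refine Finsupp.sum_congr fun l _ => ?_
    rw [hL, Finsupp.linearCombination_single, smul_smul]
  have hb0 : b = 0 := linearIndependent_iff.mp li b hLb
  have hbde : b (d + e) = c d * σ^[d] (a e) := by
    rw [hb, Finsupp.sum_apply]
    rw [Finsupp.sum]
    rw [Finset.sum_eq_single d]
    · rw [Finsupp.sum_apply, Finsupp.sum]
      rw [Finset.sum_eq_single e]
      · rw [Finsupp.single_apply, if_pos rfl]
      · intro l hl hle
        have : l < e := lt_of_le_of_ne (a.support.le_max' l hl) hle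
        rw [Finsupp.single_apply, if_neg (by omega)]
      · intro habs
        exact absurd (a.support.max'_mem hasupp) habs
    · intro j hj hjd
      have hjlt : j < d := lt_of_le_of_ne (c.support.le_max' j hj) hjd
      rw [Finsupp.sum_apply, Finsupp.sum]
      apply Finset.sum_eq_zero
      intro l hl
      have : l ≤ e := a.support.le_max' l hl
      rw [Finsupp.single_apply, if_neg (by omega)]
    · intro habs
      exact absurd (c.support.max'_mem hcsupp) habs
  rw [hb0] at hbde
  simp only [Finsupp.coe_zero, Pi.zero_apply] at hbde
  exact (mul_ne_zero hd (sigma_iter_ne_zero σ d he)) hbde.symm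

end Tor3
section Main
open Submodule
variable {K : Type} [Field K] (σ : K →+* K)

lemma main_induction (n : ℕ) :
    ∀ {M : Type} [AddCommGroup M] [Module K M] (S : M →ₛₗ[σ] M) (g : Fin n → M),
      span K {m : M | ∃ (i : Fin n) (l : ℕ), m = S^[l] (g i)} = ⊤ →
      Module.Finite K (torSub σ S) := by
  induction n with
  | zero =>
      intro M _ _ S g hspan
      have hempty : {m : M | ∃ (i : Fin 0) (l : ℕ), m = S^[l] (g i)} = ∅ := by
        ext m
        simp
      rw [hempty, span_empty] at hspan
      haveI : Module.Finite K M := Module.finite_def.mpr ⟨∅, by simpa using hspan⟩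
      infer_instance
  | succ n ih =>
      intro M _ _ S g hspan
      set V := orb σ S (g 0) with hVdef
      have hstab := orb_stable σ S (g 0)
      set Sb := Sbar σ S V hstab with hSbdef
      have hspanq : span K {m' : M ⧸ V | ∃ (i : Fin n) (l : ℕ),
          m' = Sb^[l] (V.mkQ (g i.succ))} = ⊤ := by
        rw [eq_top_iff]
        have h2 : (⊤ : Submodule K (M ⧸ V)) =
            span K (V.mkQ '' {m : M | ∃ (i : Fin (n+1)) (l : ℕ), m = S^[l] (g i)}) := by
          rw [← Submodule.map_span, hspan, Submodule.map_top, Submodule.range_mkQ]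
        rw [h2]
        apply span_le.mpr
        rintro _ ⟨x, ⟨i, l, rfl⟩, rfl⟩
        refine Fin.cases ?_ ?_ i
        · have hmem : S^[l] (g 0) ∈ V := subset_span ⟨l, rfl⟩
          have : V.mkQ (S^[l] (g 0)) = 0 := by
            rw [Submodule.mkQ_apply]
            exact (Submodule.Quotient.mk_eq_zero V).mpr hmem
          rw [this]
          exact zero_mem _
        · intro j
          apply subset_span
          exact ⟨j, l, (sbar_iter σ S V hstab l (g j.succ)).symm⟩
      haveI fdq := ih Sb (fun i => V.mkQ (g i.succ)) hspanq
      by_cases hg : IsTor σ S (g 0)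
      · -- the generator is torsion: V is finite-dimensional and torsion lifts
        haveI hVfd : FiniteDimensional K V := fd_of_istor σ S (g 0) hg
        obtain ⟨s, hs⟩ := Module.Finite.iff_fg.mp fdq
        have hsurj := Submodule.mkQ_surjective V
        choose t ht using fun y : M ⧸ V => hsurj y
        set W : Submodule K M := span K (t '' ↑s) with hWdef
        haveI hWfd : FiniteDimensional K W :=
          FiniteDimensional.span_of_finite K (s.finite_toSet.image t)
        have himg : V.mkQ '' (t '' ↑s) = ↑s := by
          rw [Set.image_image]
          simp only [ht]
          exact Set.image_id _
        have hmap : Submodule.map V.mkQ W = torSub σ Sb := by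
          rw [hWdef, Submodule.map_span, himg, hs]
        have hle : torSub σ S ≤ W ⊔ V := by
          intro m hm
          have hq : V.mkQ m ∈ torSub σ Sb := istor_mk σ S V hstab m hm
          rw [← hmap] at hq
          obtain ⟨w, hw, hwm⟩ := hq
          have hmv : m - w ∈ V := by
            rw [← Submodule.Quotient.eq V]
            rw [Submodule.mkQ_apply] at hwm
            exact hwm.symm
          have : m = w + (m - w) := by abel
          rw [this]
          exact add_mem (mem_sup_left hw) (mem_sup_right hmv)
        haveI : FiniteDimensional K ↥(W ⊔ V) := Submodule.finiteDimensional_sup _ _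
        exact Submodule.finiteDimensional_of_le hle
      · -- the generator is not torsion: torsion injects into the quotient
        have hinj : Function.Injective (V.mkQ.comp (torSub σ S).subtype) := by
          intro x y hxy
          simp only [LinearMap.comp_apply, Submodule.subtype_apply, Submodule.mkQ_apply] at hxy
          have hsub : (x : M) - y ∈ V := (Submodule.Quotient.eq V).mp hxy
          have htor : (x : M) - y ∈ torSub σ S := sub_mem x.2 y.2
          have h0 := istor_orb_eq_zero σ S (g 0) hg _ hsub htor
          exact Subtype.ext (sub_eq_zero.mp h0)
        let f' : ↥(torSub σ S) →ₗ[K] ↥(torSub σ Sb) :=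
          (V.mkQ.comp (torSub σ S).subtype).codRestrict (torSub σ Sb)
            (fun x => istor_mk σ S V hstab x x.2)
        have hinj' : Function.Injective f' := fun x y h => hinj (congrArg Subtype.val h)
        exact FiniteDimensional.of_injective f' hinj'

end Main


/-!
STATEMENT 2: If a `K{φ,ρ}`-module `M` is finitely generated as a `K⟨ρ⟩`-module,
then the set `M_{tor,ρ}` of `ρ`-torsion elements is a finite-dimensional
`K`-subspace of `M`.
-/
theorem rho_torsion_finite_dimensional
    {K : Type} [Field K] (γφ γρ : K →+* K)
    (hcomm : ∀ x : K, γφ (γρ x) = γρ (γφ x))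
    {M : Type} [AddCommGroup M] [Module K M]
    (F S : M →+ M)
    (hF : ∀ (x : K) (m : M), F (x • m) = γφ x • F m)
    (hS : ∀ (x : K) (m : M), S (x • m) = γρ x • S m)
    (hFS : ∀ m : M, F (S m) = S (F m))
    (hfg : ∃ (n : ℕ) (g : Fin n → M),
        Submodule.span K {m : M | ∃ (i : Fin n) (l : ℕ), m = S^[l] (g i)} = ⊤) :
    ∃ N : Submodule K M,
      (N : Set M) =
        {m : M | ∃ c : ℕ →₀ K, c ≠ 0 ∧ (c.sum fun i x => x • S^[i] m) = 0} ∧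
      Module.Finite K N := by
  classical
  obtain ⟨n, g, hspan⟩ := hfg
  let S' : M →ₛₗ[γρ] M :=
    { toFun := ⇑S, map_add' := map_add S, map_smul' := hS }
  refine ⟨torSub γρ S', rfl, main_induction γρ n S' g hspan⟩
end

section
/- Let M be a K{φ,ρ}-module. If M is finitely generated as K⟨ρ⟩-module, M has no nonzero φ-torsion element (M_{tor,φ} = {0}), and γ_ρ is an automorphism of K, then M is free as K⟨ρ⟩-module. -/
/-!
Write `K[X; γ]` for the skew polynomial ring with `X * a = γ a * X`, where `γ = γρ`; letting `X`
act by `S` makes `M` a finitely generated left `K[X; γ]`-module. Left division with remainder by a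
nonzero skew polynomial always works, so left ideals of `K[X; γ]` are principal and every
`S`-stable subspace of `M` is again finitely generated. Hence the `S`-torsion submodule is
finite-dimensional; it is `F`-stable, so its elements are `F`-torsion, hence zero.

Since `γ` is surjective, right division works too. Given a relation `∑ cᵢ • gᵢ = 0` among the
generators, right-divide every `cᵢ` by a nonzero `c_{i₀}` and absorb the quotients into `g_{i₀}`:
the new relation has `c_{i₀}` in place `i₀` and coefficients of smaller degree elsewhere.
Iterating, some generator becomes torsion, hence zero, and can be dropped. Induction on the number
of generators ends with a generating family without relations, i.e. a basis.
-/

open Polynomial Function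

namespace SkewPoly

section Semiring

variable {R : Type*} [Semiring R] (γ : R →+* R)

/-- The product of `R[X; γ]`, on ordinary polynomials used as coefficient sequences. -/
noncomputable def skewMul (p q : R[X]) : R[X] :=
  p.sum fun i a => q.sum fun j b => monomial (i + j) (a * (γ ^ i) b)

variable {γ}

lemma skewMul_zero_left (q : R[X]) : skewMul γ 0 q = 0 := sum_zero_index _

lemma skewMul_add_left (p p' q : R[X]) :
    skewMul γ (p + p') q = skewMul γ p q + skewMul γ p' q :=
  sum_add_index _ _ _ (fun _ => by simp [Polynomial.sum_def]) fun _ _ _ => by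
    simp only [add_mul, map_add, ← Polynomial.sum_add]

lemma skewMul_add_right (p q q' : R[X]) :
    skewMul γ p (q + q') = skewMul γ p q + skewMul γ p q' := by
  simp only [skewMul, ← Polynomial.sum_add]
  congr 1; ext i a : 2
  exact sum_add_index _ _ _ (fun _ => by simp) fun _ _ _ => by
    simp only [map_add, mul_add]

lemma skewMul_monomial_monomial (i j : ℕ) (a b : R) :
    skewMul γ (monomial i a) (monomial j b) = monomial (i + j) (a * (γ ^ i) b) := by
  simp [skewMul]

lemma natDegree_skewMul_le_of_le {p q : R[X]} {m n : ℕ} (hp : p.natDegree ≤ m)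
    (hq : q.natDegree ≤ n) : (skewMul γ p q).natDegree ≤ m + n := by
  refine natDegree_sum_le_of_forall_le _ _ fun i hi => natDegree_sum_le_of_forall_le _ _
    fun j hj => (natDegree_monomial_le _).trans ?_
  exact add_le_add ((le_natDegree_of_mem_supp i hi).trans hp)
    ((le_natDegree_of_mem_supp j hj).trans hq)

lemma coeff_skewMul_of_natDegree_le {p q : R[X]} {m n : ℕ} (hp : p.natDegree ≤ m)
    (hq : q.natDegree ≤ n) : (skewMul γ p q).coeff (m + n) = p.coeff m * (γ ^ m) (q.coeff n) := by
  simp only [skewMul, Polynomial.sum_def, finsetSum_coeff, coeff_monomial]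
  rw [Finset.sum_eq_single m, Finset.sum_eq_single n, if_pos rfl]
  · intro j hj hjn
    have := le_natDegree_of_mem_supp j hj
    rw [if_neg (by omega)]
  · intro hn; simp [notMem_support_iff.mp hn]
  · intro i hi him
    have := le_natDegree_of_mem_supp i hi
    refine Finset.sum_eq_zero fun j hj => ?_
    have := le_natDegree_of_mem_supp j hj
    rw [if_neg (by omega)]
  · intro hm; simp [notMem_support_iff.mp hm]

variable {M : Type*} [AddCommMonoid M] [Module R M] (S : M →ₛₗ[γ] M)

lemma iterate_map_smulₛₗ (j : ℕ) (a : R) (m : M) : S^[j] (a • m) = (γ ^ j) a • S^[j] m := by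
  induction j with
  | zero => simp
  | succ j ih => rw [iterate_succ_apply', ih, map_smulₛₗ, iterate_succ_apply', RingHom.coe_pow,
      RingHom.coe_pow, iterate_succ_apply']

/-- The action of `R[X; γ]` on `M` in which `X` acts by `S`. -/
noncomputable def polyAct (m : M) : R[X] →ₗ[R] M :=
  lsum fun j => LinearMap.toSpanSingleton R M (S^[j] m)

lemma polyAct_apply (m : M) (p : R[X]) : polyAct S m p = p.sum fun j a => a • S^[j] m := rfl

@[simp] lemma polyAct_monomial (m : M) (j : ℕ) (a : R) :
    polyAct S m (monomial j a) = a • S^[j] m := by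
  simp [polyAct_apply]

lemma polyAct_C (m : M) (a : R) : polyAct S m (C a) = a • m := by
  simp [← monomial_zero_left]

lemma polyAct_X (m : M) : polyAct S m X = S m := by
  simp [← monomial_one_one_eq_X]

lemma polyAct_zero_left (p : R[X]) : polyAct S 0 p = 0 := by
  simp [polyAct_apply, Polynomial.sum_def]

lemma polyAct_add (m m' : M) (p : R[X]) :
    polyAct S (m + m') p = polyAct S m p + polyAct S m' p := by
  induction p using Polynomial.induction_on' with
  | add p q hp hq => simp only [map_add, hp, hq]; abel
  | monomial j a => simp [iterate_map_add, smul_add]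

lemma polyAct_sum {α : Type*} (s : Finset α) (f : α → M) (p : R[X]) :
    polyAct S (∑ i ∈ s, f i) p = ∑ i ∈ s, polyAct S (f i) p :=
  map_sum (⟨⟨(polyAct S · p), polyAct_zero_left S p⟩, (polyAct_add S · · p)⟩ : M →+ M) f s

lemma polyAct_skewMul (m : M) (p q : R[X]) :
    polyAct S m (skewMul γ p q) = polyAct S (polyAct S m q) p := by
  induction p using Polynomial.induction_on' with
  | add p p' hp hp' => rw [skewMul_add_left, map_add, map_add, hp, hp']
  | monomial i a =>
    induction q using Polynomial.induction_on' with
    | add q q' hq hq' => rw [skewMul_add_right, map_add, hq, hq', map_add, polyAct_add]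
    | monomial j b =>
      rw [skewMul_monomial_monomial, polyAct_monomial, polyAct_monomial, polyAct_monomial,
        iterate_map_smulₛₗ, smul_smul, iterate_add_apply]

lemma map_polyAct {σ : R →+* R} (F : M →ₛₗ[σ] M) (hFS : ∀ m, F (S m) = S (F m)) (m : M) (p : R[X]) :
    F (polyAct S m p) = polyAct S (F m) (p.map σ) := by
  have hiter : ∀ j m, F (S^[j] m) = S^[j] (F m) := fun j m =>
    (Commute.iterate_left (fun x => (hFS x).symm) j m).symm
  induction p using Polynomial.induction_on' with
  | add p q hp hq => rw [map_add, map_add, hp, hq, Polynomial.map_add, map_add]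
  | monomial j a => rw [polyAct_monomial, map_smulₛₗ, map_monomial, polyAct_monomial, hiter]

lemma polyAct_mem {N : Submodule R M} (hN : Set.MapsTo S N N) {m : M} (hm : m ∈ N) (p : R[X]) :
    polyAct S m p ∈ N := by
  induction p using Polynomial.induction_on' with
  | add p q hp hq => rw [map_add]; exact N.add_mem hp hq
  | monomial j a => rw [polyAct_monomial]; exact N.smul_mem a (hN.iterate j hm)

variable {ι : Type*} [Fintype ι]

noncomputable def polyCombination (g : ι → M) : (ι → R[X]) →ₗ[R] M :=
  ∑ i, polyAct S (g i) ∘ₗ LinearMap.proj i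

lemma polyCombination_apply (g : ι → M) (c : ι → R[X]) :
    polyCombination S g c = ∑ i, polyAct S (g i) (c i) := by
  simp [polyCombination]

lemma polyCombination_single [DecidableEq ι] (g : ι → M) (i : ι) (p : R[X]) :
    polyCombination S g (Pi.single i p) = polyAct S (g i) p := by
  rw [polyCombination_apply, Fintype.sum_eq_single i fun j hj => by simp [hj], Pi.single_eq_same]

lemma mem_range_polyCombination (g : ι → M) (i : ι) :
    g i ∈ LinearMap.range (polyCombination S g) := by
  classical
  exact ⟨Pi.single i 1, by rw [polyCombination_single, ← C_1, polyAct_C, one_smul]⟩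

lemma range_polyCombination_le {N : Submodule R M} (hN : Set.MapsTo S N N) {g : ι → M}
    (hg : ∀ i, g i ∈ N) : LinearMap.range (polyCombination S g) ≤ N := by
  rintro _ ⟨c, rfl⟩
  rw [polyCombination_apply]
  exact N.sum_mem fun i _ => polyAct_mem S hN (hg i) _

lemma mapsTo_range_polyCombination (g : ι → M) :
    Set.MapsTo S (LinearMap.range (polyCombination S g))
      (LinearMap.range (polyCombination S g)) := by
  rintro _ ⟨c, rfl⟩
  refine ⟨fun i => skewMul γ X (c i), ?_⟩
  simp [polyCombination_apply, polyAct_skewMul, polyAct_X, map_sum]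

lemma range_polyCombination (g : ι → M) :
    LinearMap.range (polyCombination S g) =
      Submodule.span R {m | ∃ (i : ι) (l : ℕ), m = S^[l] (g i)} := by
  classical
  refine le_antisymm ?_ (Submodule.span_le.mpr ?_)
  · rintro _ ⟨c, rfl⟩
    rw [polyCombination_apply]
    refine Submodule.sum_mem _ fun i _ => ?_
    rw [polyAct_apply, Polynomial.sum_def]
    exact Submodule.sum_mem _ fun j _ => Submodule.smul_mem _ _ (Submodule.subset_span ⟨i, j, rfl⟩)
  · rintro _ ⟨i, j, rfl⟩
    exact ⟨Pi.single i (monomial j 1), by simp [polyCombination_single]⟩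

lemma polyCombination_snoc {n : ℕ} (g : Fin n → M) (x : M) (c : Fin n → R[X]) (p : R[X]) :
    polyCombination S (Fin.snoc g x) (Fin.snoc c p) = polyCombination S g c + polyAct S x p := by
  simp [polyCombination_apply, Fin.sum_univ_castSucc]

end Semiring

section Ring

variable {R : Type*} [Ring R] {γ : R →+* R} {M : Type*} [AddCommGroup M] [Module R M]
  (S : M →ₛₗ[γ] M) {ι : Type*} [Fintype ι]

lemma linearIndependent_of_injective_polyCombination {g : ι → M}
    (h : Injective (polyCombination S g)) :
    LinearIndependent R (fun p : ι × ℕ => S^[p.2] (g p.1)) := by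
  classical
  have := ((Pi.basis fun _ : ι => basisMonomials R).reindex
    (Equiv.sigmaEquivProd ι ℕ)).linearIndependent.map' _ (LinearMap.ker_eq_bot.mpr h)
  convert this using 1
  ext ⟨i, j⟩
  simp [polyCombination_single]

lemma linearIndependent_range_of_injective_polyCombination {g : ι → M}
    (h : Injective (polyCombination S g)) :
    LinearIndependent R (fun p : Set.range g × ℕ => S^[p.2] (p.1 : M)) := by
  convert (linearIndependent_of_injective_polyCombination S h).comp _
    ((Set.rangeSplitting_injective g).prodMap injective_id) using 1
  ext ⟨x, l⟩
  simp [Set.apply_rangeSplitting]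

end Ring

section Division

lemma exists_degree_sub_lt {R : Type*} [Ring R] (f : R[X] →+ R[X]) (N : ℕ)
    (hf : ∀ n ≥ N, ∀ a : R, ∃ u, (f u).natDegree ≤ n ∧ (f u).coeff n = a) (p : R[X]) :
    ∃ u, (p - f u).degree < N := by
  suffices h : ∀ n : ℕ, ∀ p : R[X], p.degree < n → ∃ u, (p - f u).degree < N from
    h _ p (degree_le_natDegree.trans_lt (by exact_mod_cast p.natDegree.lt_succ_self))
  intro n
  induction n with
  | zero => exact fun p hp => ⟨0, by simpa using hp.trans_le (by exact_mod_cast N.zero_le)⟩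
  | succ n ih =>
    intro p hp
    by_cases hn : n < N
    · exact ⟨0, by simpa using hp.trans_le (by exact_mod_cast hn)⟩
    obtain ⟨u, hu, hua⟩ := hf n (not_lt.mp hn) (p.coeff n)
    have hlt : (p - f u).degree < n := by
      refine degree_lt_iff_coeff_zero _ _ |>.mpr fun k hk => ?_
      rcases hk.eq_or_lt with rfl | hk
      · rw [coeff_sub, hua, sub_self]
      · rw [coeff_sub, coeff_eq_zero_of_degree_lt (hp.trans_le (by exact_mod_cast hk)),
          coeff_eq_zero_of_natDegree_lt (hu.trans_lt hk), sub_zero]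
    obtain ⟨v, hv⟩ := ih _ hlt
    exact ⟨u + v, by rwa [map_add, ← sub_sub]⟩

variable {K : Type*} [DivisionRing K] (γ : K →+* K)

lemma exists_degree_sub_skewMul_left_lt {q : K[X]} (hq : q ≠ 0) (p : K[X]) :
    ∃ u, (p - skewMul γ u q).degree < q.natDegree := by
  refine exists_degree_sub_lt (.mk' (skewMul γ · q) fun u v => skewMul_add_left u v q) _
    (fun n hn a => ?_) p
  obtain ⟨s, rfl⟩ := Nat.exists_eq_add_of_le' hn
  have hlc : (γ ^ s) q.leadingCoeff ≠ 0 := _root_.map_ne_zero _ |>.mpr (leadingCoeff_ne_zero.mpr hq)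
  refine ⟨monomial s (a * ((γ ^ s) q.leadingCoeff)⁻¹), ?_, ?_⟩
  · exact natDegree_skewMul_le_of_le (natDegree_monomial_le _) le_rfl
  · simp only [AddMonoidHom.mk'_apply]
    rw [coeff_skewMul_of_natDegree_le (natDegree_monomial_le _) le_rfl, coeff_monomial_same,
      ← leadingCoeff, inv_mul_cancel_right₀ hlc]

lemma exists_degree_sub_skewMul_right_lt (hγ : Surjective γ) {q : K[X]} (hq : q ≠ 0) (p : K[X]) :
    ∃ v, (p - skewMul γ q v).degree < q.natDegree := by
  refine exists_degree_sub_lt (.mk' (skewMul γ q) (skewMul_add_right q)) _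
    (fun n hn a => ?_) p
  obtain ⟨s, rfl⟩ := Nat.exists_eq_add_of_le hn
  obtain ⟨y, hy⟩ := (hγ.iterate q.natDegree) (q.leadingCoeff⁻¹ * a)
  refine ⟨monomial s y, ?_, ?_⟩
  · exact natDegree_skewMul_le_of_le le_rfl (natDegree_monomial_le _)
  · simp only [AddMonoidHom.mk'_apply]
    rw [coeff_skewMul_of_natDegree_le le_rfl (natDegree_monomial_le _), coeff_monomial_same,
      RingHom.coe_pow, hy, ← leadingCoeff, mul_inv_cancel_left₀ (leadingCoeff_ne_zero.mpr hq)]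

end Division

section Module

variable {K : Type*} [DivisionRing K] {γ : K →+* K} {M : Type*} [AddCommGroup M] [Module K M]
  (S : M →ₛₗ[γ] M)

def IsTorsion (m : M) : Prop := ∃ p : K[X], p ≠ 0 ∧ polyAct S m p = 0

variable {S}

lemma IsTorsion.fg_range {m : M} (h : IsTorsion S m) : (LinearMap.range (polyAct S m)).FG := by
  classical
  obtain ⟨p, hp, hpm⟩ := h
  have : LinearMap.range (polyAct S m) = (degreeLT K p.natDegree).map (polyAct S m) := by
    refine le_antisymm ?_ LinearMap.map_le_range
    rintro _ ⟨q, rfl⟩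
    obtain ⟨u, hu⟩ := exists_degree_sub_skewMul_left_lt γ hp q
    refine ⟨q - skewMul γ u p, mem_degreeLT.mpr hu, ?_⟩
    rw [map_sub, polyAct_skewMul, hpm, polyAct_zero_left, sub_zero]
  rw [this, degreeLT_eq_span_X_pow]
  exact (Submodule.fg_span (Finset.finite_toSet _)).map _

lemma isTorsion_of_fg_range {m : M} (h : (LinearMap.range (polyAct S m)).FG) : IsTorsion S m := by
  by_contra hm
  have hker : LinearMap.ker (polyAct S m).rangeRestrict = ⊥ := by
    rw [LinearMap.ker_rangeRestrict, Submodule.eq_bot_iff]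
    exact fun p hp => by_contra fun hp0 => hm ⟨p, hp0, hp⟩
  have := Module.Finite.iff_fg.mpr h
  exact Module.Finite.not_linearIndependent_of_infinite _
    ((basisMonomials K).linearIndependent.map' _ hker)

lemma IsTorsion.map {σ : K →+* K} (F : M →ₛₗ[σ] M) (hFS : ∀ m, F (S m) = S (F m)) {m : M}
    (h : IsTorsion S m) : IsTorsion S (F m) := by
  obtain ⟨p, hp, hpm⟩ := h
  exact ⟨p.map σ, Polynomial.map_ne_zero hp, by rw [← map_polyAct S F hFS, hpm, map_zero]⟩

variable (S)

def torsion : Submodule K M where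
  carrier := {m | IsTorsion S m}
  zero_mem' := ⟨1, one_ne_zero, polyAct_zero_left S 1⟩
  add_mem' {m m'} hm hm' := by
    refine isTorsion_of_fg_range ((hm.fg_range.sup hm'.fg_range).of_le ?_)
    rintro _ ⟨p, rfl⟩
    rw [polyAct_add]
    exact Submodule.add_mem_sup ⟨p, rfl⟩ ⟨p, rfl⟩
  smul_mem' a m hm := by
    refine isTorsion_of_fg_range (hm.fg_range.of_le ?_)
    rintro _ ⟨p, rfl⟩
    exact ⟨skewMul γ p (C a), by rw [polyAct_skewMul, polyAct_C]⟩

lemma mapsTo_torsion : Set.MapsTo S (torsion S) (torsion S) :=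
  fun _ hm => IsTorsion.map S (fun _ => rfl) hm

lemma exists_forall_eq_skewMul (I : AddSubgroup K[X]) (hI : ∀ p ∈ I, ∀ u, skewMul γ u p ∈ I) :
    ∃ p₀ ∈ I, ∀ p ∈ I, ∃ u, p = skewMul γ u p₀ := by
  classical
  by_cases hI0 : ∀ p ∈ I, p = 0
  · exact ⟨0, I.zero_mem, fun p hp => ⟨0, by rw [hI0 p hp, skewMul_zero_left]⟩⟩
  obtain ⟨p₁, hp₁I, hp₁⟩ : ∃ p ∈ I, p ≠ 0 := by simpa using hI0
  have hex : ∃ d, ∃ p ∈ I, p ≠ 0 ∧ p.natDegree = d := ⟨_, p₁, hp₁I, hp₁, rfl⟩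
  obtain ⟨p₀, hp₀I, hp₀, hd⟩ := Nat.find_spec hex
  refine ⟨p₀, hp₀I, fun p hp => ?_⟩
  obtain ⟨u, hu⟩ := exists_degree_sub_skewMul_left_lt γ hp₀ p
  refine ⟨u, sub_eq_zero.mp (by_contra fun hr => ?_)⟩
  exact Nat.find_min hex (hd ▸ (natDegree_lt_iff_degree_lt hr).mpr hu)
    ⟨_, I.sub_mem hp (hI _ hp₀I u), hr, rfl⟩

lemma exists_leading_generator {N : Submodule K M} (hN : Set.MapsTo S N N) {ι : Type*} [Fintype ι]
    (g : ι → M) (x : M) :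
    ∃ c₀ p₀, polyCombination S g c₀ + polyAct S x p₀ ∈ N ∧
      ∀ c p, polyCombination S g c + polyAct S x p ∈ N → ∃ u, p = skewMul γ u p₀ := by
  let I : Submodule K K[X] :=
    (N.comap ((polyCombination S g).coprod (polyAct S x))).map (LinearMap.snd K _ _)
  have hI : ∀ p ∈ I, ∀ u, skewMul γ u p ∈ I := by
    rintro _ ⟨⟨c, p⟩, hcp, rfl⟩ u
    obtain ⟨c', hc'⟩ := polyAct_mem S (mapsTo_range_polyCombination S g) ⟨c, rfl⟩ u
    refine ⟨⟨c', skewMul γ u p⟩, ?_, rfl⟩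
    simpa [hc', polyAct_skewMul, polyAct_add] using polyAct_mem S hN hcp u
  obtain ⟨_, ⟨⟨c₀, p₀⟩, hcp₀, rfl⟩, hp₀⟩ := exists_forall_eq_skewMul I.toAddSubgroup hI
  exact ⟨c₀, p₀, hcp₀, fun c p hcp => hp₀ p ⟨(c, p), hcp, rfl⟩⟩

theorem exists_range_polyCombination_eq {n : ℕ} (g : Fin n → M) (N : Submodule K M)
    (hN : Set.MapsTo S N N) (hle : N ≤ LinearMap.range (polyCombination S g)) :
    ∃ h : Fin n → M, LinearMap.range (polyCombination S h) = N := by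
  induction n generalizing N with
  | zero => exact ⟨g, le_antisymm (range_polyCombination_le S hN fun i => i.elim0) hle⟩
  | succ n ih =>
    rw [← Fin.snoc_init_self g] at hle
    set g' := Fin.init g
    set x := g (Fin.last n)
    have hR' := mapsTo_range_polyCombination S g'
    obtain ⟨h', hh'⟩ := ih g' (N ⊓ LinearMap.range (polyCombination S g'))
      (fun y hy => ⟨hN hy.1, hR' hy.2⟩) inf_le_right
    obtain ⟨c₀, p₀, hm₀, hp₀⟩ := exists_leading_generator S hN g' x
    set m₀ := polyCombination S g' c₀ + polyAct S x p₀
    refine ⟨Fin.snoc h' m₀, le_antisymm ?_ fun v hv => ?_⟩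
    · rintro _ ⟨c, rfl⟩
      rw [← Fin.snoc_init_self c, polyCombination_snoc]
      exact N.add_mem (hh'.le ⟨_, rfl⟩).1 (polyAct_mem S hN hm₀ _)
    obtain ⟨c, rfl⟩ := hle hv
    rw [← Fin.snoc_init_self c, polyCombination_snoc] at hv ⊢
    obtain ⟨u, hu⟩ := hp₀ _ _ hv
    obtain ⟨c', hc'⟩ := polyAct_mem S hR' ⟨c₀, rfl⟩ u
    have hm₀u : polyAct S m₀ u = polyCombination S g' c' + polyAct S x (skewMul γ u p₀) := by
      rw [polyAct_add, polyAct_skewMul, hc']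
    obtain ⟨d, hd⟩ : polyCombination S g' (Fin.init c - c') ∈
        LinearMap.range (polyCombination S h') := by
      refine hh' ▸ ⟨?_, ⟨_, rfl⟩⟩
      have := N.sub_mem hv (polyAct_mem S hN hm₀ u)
      rwa [hu, hm₀u, add_sub_add_right_eq_sub, ← map_sub] at this
    refine ⟨Fin.snoc d u, ?_⟩
    rw [polyCombination_snoc, hd, map_sub, hu, hm₀u]
    abel

lemma fg_torsion {n : ℕ} {g : Fin n → M} (hg : Surjective (polyCombination S g)) :
    (torsion S).FG := by
  obtain ⟨h, hh⟩ := exists_range_polyCombination_eq S g (torsion S) (mapsTo_torsion S)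
    (LinearMap.range_eq_top.mpr hg ▸ le_top)
  have hmem (i) : h i ∈ torsion S := hh ▸ mem_range_polyCombination S h i
  refine (Submodule.fg_iSup _ fun i => IsTorsion.fg_range (hmem i)).of_le (hh ▸ ?_)
  rintro _ ⟨c, rfl⟩
  rw [polyCombination_apply]
  exact Submodule.sum_mem _ fun i _ => Submodule.mem_iSup_of_mem i ⟨c i, rfl⟩

theorem eq_zero_of_isTorsion {n : ℕ} {g : Fin n → M} (hg : Surjective (polyCombination S g))
    {σ : K →+* K} (F : M →ₛₗ[σ] M) (hFS : ∀ m, F (S m) = S (F m))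
    (hF : ∀ m, ¬ LinearIndependent K (fun j => F^[j] m) → m = 0) {m : M} (hm : IsTorsion S m) :
    m = 0 := by
  have hF_torsion : Set.MapsTo F (torsion S) (torsion S) := fun _ hm => IsTorsion.map F hFS hm
  have := Module.Finite.iff_fg.mpr (fg_torsion S hg)
  exact hF m fun hli => Module.Finite.not_linearIndependent_of_infinite
    (fun j => (⟨F^[j] m, hF_torsion.iterate j hm⟩ : torsion S)) (hli.of_comp (torsion S).subtype)

section

variable {ι : Type*} [Fintype ι] [DecidableEq ι]

lemma exists_reduced_relation (hγ : Surjective γ) {g : ι → M} {c : ι → K[X]}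
    (hc : polyCombination S g c = 0) {i₀ : ι} (hi₀ : c i₀ ≠ 0) :
    ∃ g' c', LinearMap.range (polyCombination S g) ≤ LinearMap.range (polyCombination S g') ∧
      polyCombination S g' c' = 0 ∧ c' i₀ = c i₀ ∧ ∀ i ≠ i₀, (c' i).degree < (c i₀).natDegree := by
  choose v hv using fun i => exists_degree_sub_skewMul_right_lt γ hγ hi₀ (c i)
  set w := g i₀ + ∑ i ∈ Finset.univ.erase i₀, polyAct S (g i) (v i)
  refine ⟨update g i₀ w, update (fun i => c i - skewMul γ (c i₀) (v i)) i₀ (c i₀), ?_, ?_,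
    by simp, fun i hi => by simpa [hi] using hv i⟩
  · refine range_polyCombination_le S (mapsTo_range_polyCombination S _) fun j => ?_
    by_cases hj : j = i₀
    · subst hj
      have hw := mem_range_polyCombination S (update g j w) j
      rw [update_self] at hw
      have : g j = w - ∑ i ∈ Finset.univ.erase j, polyAct S (g i) (v i) := by simp [w]
      rw [this]
      refine Submodule.sub_mem _ hw (Submodule.sum_mem _ fun i hi => ?_)
      have hi' := mem_range_polyCombination S (update g j w) i
      rw [update_of_ne (Finset.ne_of_mem_erase hi)] at hi'
      exact polyAct_mem S (mapsTo_range_polyCombination S _) hi' _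
    · simpa [hj] using mem_range_polyCombination S (update g i₀ w) j
  · rw [polyCombination_apply, ← hc, polyCombination_apply]
    simp only [apply_update₂ (fun i m p => polyAct S m p)]
    rw [Finset.sum_update_of_mem (Finset.mem_univ _), Finset.sdiff_singleton_eq_erase,
      ← Finset.add_sum_erase _ _ (Finset.mem_univ i₀)]
    simp only [w, polyAct_add, polyAct_sum, ← polyAct_skewMul, map_sub]
    rw [add_assoc, ← Finset.sum_add_distrib]
    simp

lemma exists_isTorsion_generator (hγ : Surjective γ) {g : ι → M} {c : ι → K[X]}
    (hc : polyCombination S g c = 0) {i₀ : ι} (hi₀ : c i₀ ≠ 0) :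
    ∃ g' : ι → M, LinearMap.range (polyCombination S g) ≤ LinearMap.range (polyCombination S g') ∧
      ∃ i, IsTorsion S (g' i) := by
  induction hd : (c i₀).natDegree using Nat.strong_induction_on generalizing g c i₀ with
  | _ d ih =>
    obtain ⟨g', c', hle, hc', hci₀, hdeg⟩ := exists_reduced_relation S hγ hc hi₀
    by_cases hr : ∀ i ≠ i₀, c' i = 0
    · refine ⟨g', hle, i₀, c i₀, hi₀, ?_⟩
      rwa [polyCombination_apply, Fintype.sum_eq_single i₀ fun i hi => by rw [hr i hi, map_zero],
        hci₀] at hc'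
    obtain ⟨i₁, hi₁, hci₁⟩ : ∃ i ≠ i₀, c' i ≠ 0 := by simpa using hr
    obtain ⟨g'', hle', hg''⟩ :=
      ih _ (hd ▸ (natDegree_lt_iff_degree_lt hci₁).mpr (hdeg i₁ hi₁)) hc' hci₁ rfl
    exact ⟨g'', hle.trans hle', hg''⟩

end

lemma range_polyCombination_succAbove_of_eq_zero {n : ℕ} {g : Fin (n + 1) → M} {i : Fin (n + 1)}
    (hi : g i = 0) :
    LinearMap.range (polyCombination S g) ≤
      LinearMap.range (polyCombination S (g ∘ i.succAbove)) := by
  refine range_polyCombination_le S (mapsTo_range_polyCombination S _) fun j => ?_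
  rcases eq_or_ne j i with rfl | hj
  · exact hi ▸ Submodule.zero_mem _
  · obtain ⟨k, rfl⟩ := Fin.exists_succAbove_eq hj
    exact mem_range_polyCombination S (g ∘ i.succAbove) k

theorem exists_bijective_polyCombination (hγ : Surjective γ) (htf : ∀ m, IsTorsion S m → m = 0)
    {n : ℕ} (g : Fin n → M) (hg : Surjective (polyCombination S g)) :
    ∃ (k : ℕ) (h : Fin k → M), Bijective (polyCombination S h) := by
  induction n with
  | zero => exact ⟨0, g, injective_of_subsingleton _, hg⟩
  | succ n ih =>
    by_cases hinj : Injective (polyCombination S g)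
    · exact ⟨_, g, hinj, hg⟩
    obtain ⟨c, hc, hc0⟩ : ∃ c, polyCombination S g c = 0 ∧ c ≠ 0 := by
      simpa [injective_iff_map_eq_zero] using hinj
    obtain ⟨i₀, hi₀⟩ := Function.ne_iff.mp hc0
    obtain ⟨g', hle, i, hi⟩ := exists_isTorsion_generator S hγ hc hi₀
    refine ih (g' ∘ i.succAbove) (LinearMap.range_eq_top.mp (top_le_iff.mp ?_))
    rw [← LinearMap.range_eq_top.mpr hg]
    exact hle.trans (range_polyCombination_succAbove_of_eq_zero S (htf _ hi))

end Module
end SkewPoly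

theorem free_over_Krho_of_fg_and_phi_torsionfree_general
    {K : Type} [Field K] (γφ γρ : K →+* K)
    {M : Type} [AddCommGroup M] [Module K M]
    (F S : M →+ M)
    (hF : ∀ (x : K) (m : M), F (x • m) = γφ x • F m)
    (hS : ∀ (x : K) (m : M), S (x • m) = γρ x • S m)
    (hFS : ∀ m : M, F (S m) = S (F m))
    (hfg : ∃ (n : ℕ) (g : Fin n → M),
        Submodule.span K {m : M | ∃ (i : Fin n) (l : ℕ), m = S^[l] (g i)} = ⊤)
    (htf : ∀ m : M,
        (∃ c : ℕ →₀ K, c ≠ 0 ∧ (c.sum fun i x => x • F^[i] m) = 0) → m = 0)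
    (hbij : Function.Bijective γρ) :
    ∃ s : Set M,
      LinearIndependent K (fun p : s × ℕ => S^[p.2] (p.1 : M)) ∧
      Submodule.span K {m : M | ∃ x ∈ s, ∃ l : ℕ, m = S^[l] x} = ⊤ := by
  let Sₗ : M →ₛₗ[γρ] M := { S with map_smul' := hS }
  let Fₗ : M →ₛₗ[γφ] M := { F with map_smul' := hF }
  obtain ⟨n, g, hg⟩ := hfg
  have hsurj : Surjective (SkewPoly.polyCombination Sₗ g) := by
    rwa [← LinearMap.range_eq_top, SkewPoly.range_polyCombination]
  have hFtf : ∀ m, ¬ LinearIndependent K (fun j => Fₗ^[j] m) → m = 0 := by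
    intro m hm
    simp only [linearIndependent_iff, Finsupp.linearCombination_apply, not_forall,
      exists_prop] at hm
    obtain ⟨c, hc, hc0⟩ := hm
    exact htf m ⟨c, hc0, hc⟩
  have hSₗtf : ∀ m, SkewPoly.IsTorsion Sₗ m → m = 0 := fun m =>
    SkewPoly.eq_zero_of_isTorsion Sₗ hsurj Fₗ hFS hFtf
  obtain ⟨k, h, hinj, hsurj'⟩ :=
    SkewPoly.exists_bijective_polyCombination Sₗ hbij.2 hSₗtf g hsurj
  refine ⟨Set.range h, SkewPoly.linearIndependent_range_of_injective_polyCombination Sₗ hinj, ?_⟩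
  have hSₗ : ⇑Sₗ = ⇑S := rfl
  rw [← LinearMap.range_eq_top.mpr hsurj', SkewPoly.range_polyCombination]
  simp [hSₗ]

theorem free_over_Krho_of_fg_and_phi_torsionfree
    {K : Type} [Field K] (γφ γρ : K →+* K)
    (hcomm : ∀ x : K, γφ (γρ x) = γρ (γφ x))
    {M : Type} [AddCommGroup M] [Module K M]
    (F S : M →+ M)
    (hF : ∀ (x : K) (m : M), F (x • m) = γφ x • F m)
    (hS : ∀ (x : K) (m : M), S (x • m) = γρ x • S m)
    (hFS : ∀ m : M, F (S m) = S (F m))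
    (hfg : ∃ (n : ℕ) (g : Fin n → M),
        Submodule.span K {m : M | ∃ (i : Fin n) (l : ℕ), m = S^[l] (g i)} = ⊤)
    (htf : ∀ m : M,
        (∃ c : ℕ →₀ K, c ≠ 0 ∧ (c.sum fun i x => x • F^[i] m) = 0) → m = 0)
    (hbij : Function.Bijective γρ) :
    ∃ s : Set M,
      LinearIndependent K (fun p : s × ℕ => S^[p.2] (p.1 : M)) ∧
      Submodule.span K {m : M | ∃ x ∈ s, ∃ l : ℕ, m = S^[l] x} = ⊤ :=
  free_over_Krho_of_fg_and_phi_torsionfree_general γφ γρ F S hF hS hFS hfg htf hbij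
end

section
/- In the situation below (M free of rank d over K⟨φ⟩ with ρ-action matrix D, and J a Janet basis for ⟨p_1,…,p_d⟩), the restriction of the projection pr : 𝓕 → M to the set W_gen is injective. -/
/-!
Common setup: the skew polynomial ring `D = K{φ,ρ}` (with commuting endomorphisms
`γφ, γρ : K → K`, `φ·x = γφ(x)·φ`, `ρ·x = γρ(x)·ρ`), the free left `D`-module
`𝓕 = ⊕_{i=1}^d D κ_i`, its monomials `φ^k ρ^j κ_i`, the monomial order, cones,
Janet bases, and the data attached to a `D`-module `M` that is free over `K⟨φ⟩`.

`𝓕` is realized concretely as finitely supported coefficient functions on the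
set of monomial indices `(i, k, j) ↔ φ^k ρ^j κ_i`; multiplication by `φ` resp. `ρ`
is the K-semilinear shift operator `PhiMul` resp. `RhoMul`.
-/

namespace JanetSetup

/-- Index of a monomial `φ^k ρ^j κ_i` of `𝓕`: the triple `(i, k, j)`. -/
abbrev MonIx (d : ℕ) := Fin d × ℕ × ℕ

/-- The free module `𝓕 = ⊕_{i=1}^d D κ_i`, as coefficient functions on monomials. -/
abbrev Fr (K : Type) [Field K] (d : ℕ) : Type := MonIx d →₀ K

variable {K : Type} [Field K] {d : ℕ}

/-- Left multiplication by the variable `φ` on `𝓕`. -/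
noncomputable def PhiMul (γφ : K →+* K) (f : Fr K d) : Fr K d :=
  Finsupp.mapDomain (fun m => (m.1, m.2.1 + 1, m.2.2))
    (Finsupp.mapRange (fun x => γφ x) (map_zero γφ) f)

/-- Left multiplication by the variable `ρ` on `𝓕`. -/
noncomputable def RhoMul (γρ : K →+* K) (f : Fr K d) : Fr K d :=
  Finsupp.mapDomain (fun m => (m.1, m.2.1, m.2.2 + 1))
    (Finsupp.mapRange (fun x => γρ x) (map_zero γρ) f)

/-- The left `D`-submodule of `𝓕` generated by a set `s` (as a `K`-subspace:
the `K`-span of all `φ^k ρ^j g`, `g ∈ s`). -/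
noncomputable def DSpan (γφ γρ : K →+* K) (s : Set (Fr K d)) : Submodule K (Fr K d) :=
  Submodule.span K
    {x | ∃ (k j : ℕ) (g : Fr K d), g ∈ s ∧ x = (PhiMul γφ)^[k] ((RhoMul γρ)^[j] g)}

/-- The monomial order: lexicographic with `ρ ≺ φ`, position-over-term with
`κ_{i₁} ≻ κ_{i₂}` for `i₁ < i₂`. -/
def MLt (a b : MonIx d) : Prop :=
  b.1 < a.1 ∨ (a.1 = b.1 ∧ (a.2.1 < b.2.1 ∨ (a.2.1 = b.2.1 ∧ a.2.2 < b.2.2)))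

/-- `m` is the leading monomial of `f`. -/
def IsLm (f : Fr K d) (m : MonIx d) : Prop :=
  m ∈ f.support ∧ ∀ m' ∈ f.support, m' ≠ m → MLt m' m

/-- The `μ`-cone of a monomial `m`; `μ = (φ ∈ μ, ρ ∈ μ)` as a pair of Booleans. -/
def Cone (μ : Bool × Bool) (m : MonIx d) : Set (MonIx d) :=
  {x | ∃ a b : ℕ, (μ.1 = true ∨ a = 0) ∧ (μ.2 = true ∨ b = 0) ∧
      x = (m.1, m.2.1 + a, m.2.2 + b)}

/-- A Janet basis `{(b_1,μ_1),…,(b_r,μ_r)}` for the submodule `N ⊆ 𝓕`: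
the `b_i` generate `N` as a left `D`-module and the set of leading monomials of
nonzero elements of `N` is the disjoint union of the cones `Mon(μ_i)·lm(b_i)`. -/
structure JanetBasis (γφ γρ : K →+* K) (d : ℕ) (N : Submodule K (Fr K d)) where
  r : ℕ
  b : Fin r → Fr K d
  μ : Fin r → Bool × Bool
  /-- the leading monomial of `b i` -/
  lmb : Fin r → MonIx d
  b_ne : ∀ i, b i ≠ 0
  b_lm : ∀ i, IsLm (b i) (lmb i)
  pair_inj : Function.Injective fun i => (b i, μ i)
  span_eq : DSpan γφ γρ (Set.range b) = N
  lm_cover : ∀ f ∈ N, f ≠ 0 → ∀ m, IsLm f m → ∃ i, m ∈ Cone (μ i) (lmb i)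
  cone_lm : ∀ i, ∀ m ∈ Cone (μ i) (lmb i), ∃ f ∈ N, f ≠ 0 ∧ IsLm f m
  disj : ∀ i i' m, m ∈ Cone (μ i) (lmb i) → m ∈ Cone (μ i') (lmb i') → i = i'

variable (γφ γρ : K →+* K)

/-- `f` is reduced (in normal form) w.r.t. the pairs of `J` indexed by `P`:
no monomial of `f` lies in one of the corresponding cones. -/
def IsReduced {N : Submodule K (Fr K d)} (J : JanetBasis γφ γρ d N)
    (P : Set (Fin J.r)) (f : Fr K d) : Prop :=
  ∀ m ∈ f.support, ∀ i ∈ P, m ∉ Cone (J.μ i) (J.lmb i)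

/-- `h` is the normal form `NF(g, ·)` of `g` with respect to the pairs of `J`
indexed by `P`: the reduction process subtracts left multiples of the `b i`
(`i ∈ P`), so `g - h` lies in the `D`-span of these, and the result is reduced. -/
def IsNFOf {N : Submodule K (Fr K d)} (J : JanetBasis γφ γρ d N)
    (P : Set (Fin J.r)) (g h : Fr K d) : Prop :=
  g - h ∈ DSpan γφ γρ (J.b '' P) ∧ IsReduced γφ γρ J P h

/-- The projection `pr : 𝓕 → M`, `φ^k ρ^j κ_i ↦ F^k S^j κ̄_i`, for a `D`-module `M`
with `φ`-action `F`, `ρ`-action `S` and distinguished elements `κb i = κ̄_i`. -/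
noncomputable def pr {M : Type} [AddCommGroup M] [Module K M]
    (F S : M →+ M) (κb : Fin d → M) (f : Fr K d) : M :=
  f.sum fun m x => x • F^[m.2.1] (S^[m.2.2] (κb m.1))

/-- The relation `p_i = ρ κ_i − Σ_j D_{ij} κ_j ∈ 𝓕`, where the entry `D_{ij} ∈ K⟨φ⟩`
is recorded as the finitely supported coefficient function of its powers of `φ`. -/
noncomputable def pelt (Dmat : Fin d → Fin d → (ℕ →₀ K)) (i : Fin d) : Fr K d :=
  Finsupp.single (i, 0, 1) (1 : K)
    - ∑ j : Fin d, (Dmat i j).sum fun k x => Finsupp.single (j, k, 0) x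

/-- `n_i = inf{n | ∃ (b,μ) ∈ J, lm(b) = φ^n κ_i} ∈ ℕ∪{∞}`. -/
noncomputable def nVal {N : Submodule K (Fr K d)} (J : JanetBasis γφ γρ d N)
    (i : Fin d) : ℕ∞ :=
  sInf {c : ℕ∞ | ∃ n : ℕ, c = n ∧ ∃ ix, J.lmb ix = (i, n, 0)}

/-- `m_i = inf{n | ∃ (b,μ) ∈ J, ∃ l ≥ 0, lm(b) = φ^n ρ^l κ_i} ∈ ℕ∪{∞}`. -/
noncomputable def mVal {N : Submodule K (Fr K d)} (J : JanetBasis γφ γρ d N)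
    (i : Fin d) : ℕ∞ :=
  sInf {c : ℕ∞ | ∃ n : ℕ, c = n ∧ ∃ ix l, J.lmb ix = (i, n, l)}

/-- `W_gen = {φ^j κ_i | 1 ≤ i ≤ d, 0 ≤ j < n_i} ⊆ 𝓕`. -/
def Wgen {N : Submodule K (Fr K d)} (J : JanetBasis γφ γρ d N) : Set (Fr K d) :=
  {w | ∃ (i : Fin d) (j : ℕ), (j : ℕ∞) < nVal γφ γρ J i ∧
      w = Finsupp.single (i, j, 0) (1 : K)}

/-- `W_ind = {φ^j κ_i | 1 ≤ i ≤ d, 0 ≤ j < m_i} ⊆ 𝓕`. -/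
def Wind {N : Submodule K (Fr K d)} (J : JanetBasis γφ γρ d N) : Set (Fr K d) :=
  {w | ∃ (i : Fin d) (j : ℕ), (j : ℕ∞) < mVal γφ γρ J i ∧
      w = Finsupp.single (i, j, 0) (1 : K)}

end JanetSetup

open JanetSetup

/-!
STATEMENT 5: In the situation of Section 3 of the paper (M free of rank d over
K⟨φ⟩ with ρ-action matrix D, and J a Janet basis for ⟨p_1,…,p_d⟩), the restriction
of the projection `pr : 𝓕 → M` to the set `W_gen` is injective.
-/
theorem pr_injOn_Wgen
    {K : Type} [Field K] {d : ℕ} (γφ γρ : K →+* K)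
    (hcomm : ∀ x : K, γφ (γρ x) = γρ (γφ x))
    {M : Type} [AddCommGroup M] [Module K M]
    -- `M` is a left `D`-module: `F` and `S` are the commuting semilinear actions
    -- of `φ` and `ρ` on `M`
    (F S : M →+ M)
    (hF : ∀ (x : K) (m : M), F (x • m) = γφ x • F m)
    (hS : ∀ (x : K) (m : M), S (x • m) = γρ x • S m)
    (hFS : ∀ m : M, F (S m) = S (F m))
    -- `M` is free of rank `d` as `K⟨φ⟩`-module with basis `κ̄_1, …, κ̄_d`
    (κb : Fin d → M)
    (hli : LinearIndependent K fun p : Fin d × ℕ => F^[p.2] (κb p.1))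
    (hsp : Submodule.span K (Set.range fun p : Fin d × ℕ => F^[p.2] (κb p.1)) = ⊤)
    -- the `ρ`-action on the basis is given by the matrix `D ∈ Mat_{d×d}(K⟨φ⟩)`
    (Dmat : Fin d → Fin d → (ℕ →₀ K))
    (hact : ∀ i, S (κb i) = ∑ j : Fin d, (Dmat i j).sum fun k x => x • F^[k] (κb j))
    -- `J` is a Janet basis of `⟨p_1, …, p_d⟩`
    (J : JanetBasis γφ γρ d (DSpan γφ γρ (Set.range (pelt Dmat))))
    :
    Set.InjOn (pr F S κb) (Wgen γφ γρ J) := by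
  rintro w1 ⟨i1, j1, -, rfl⟩ w2 ⟨i2, j2, -, rfl⟩ h
  have e : ∀ (i : Fin d) (j : ℕ),
      pr F S κb (Finsupp.single (i, j, 0) (1 : K)) = F^[j] (κb i) := by
    intro i j
    simp [pr, Finsupp.sum_single_index]
  rw [e, e] at h
  have h2 : ((i1, j1) : Fin d × ℕ) = (i2, j2) := hli.injective h
  obtain ⟨rfl, rfl⟩ := Prod.mk.injEq .. ▸ h2
  rfl
end

section
/- In the situation below (M free of rank d over K⟨φ⟩ with ρ-action matrix D, and J a Janet basis for ⟨p_1,…,p_d⟩), the image pr(W_gen) generates M as K⟨ρ⟩-module; that is, the family (S^l(pr(w)))_{w ∈ W_gen, l ≥ 0} spans M as a K-vector space. -/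
open JanetSetup

/-!
Every `F^k S^l κ̄_i` lies in the span `V` of the `S^l (pr w)`, by well-founded induction along
the monomial order. If `k < n_i` it is `S^l (pr (φ^k κ_i))`. Otherwise some `b ∈ J` has
`lm(b) = φ^n κ_i` with `n ≤ k`; then `φ^(k-n) ρ^l b` lies in `⟨p_1, …, p_d⟩ ⊆ ker pr` and has
leading monomial `φ^k ρ^l κ_i`, so applying `pr` to it writes `F^k S^l κ̄_i` as a combination
of images of smaller monomials. Since the `F^k κ̄_i` span `M`, `V = M`.
-/

namespace JanetSetup

open Finsupp

variable {K : Type} [Field K] {d : ℕ}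

def shift (a l : ℕ) (m : MonIx d) : MonIx d := (m.1, m.2.1 + a, m.2.2 + l)

lemma shift_injective (a l : ℕ) : Function.Injective (shift (d := d) a l) := by
  rintro ⟨i, k, j⟩ ⟨i', k', j'⟩ h
  simp only [shift, Prod.mk.injEq] at h
  obtain ⟨rfl, hk, hj⟩ := h
  simp only [Prod.mk.injEq, true_and]
  omega

lemma MLt.shift {m m' : MonIx d} (h : MLt m' m) (a l : ℕ) :
    MLt (shift a l m') (shift a l m) := by
  obtain ⟨i, k, j⟩ := m
  obtain ⟨i', k', j'⟩ := m'
  simp only [MLt, JanetSetup.shift] at h ⊢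
  omega

lemma wellFounded_MLt : WellFounded (MLt (d := d)) := by
  refine Subrelation.wf (fun {m' m} h => ?_)
    (InvImage.wf (fun m : MonIx d => toLex (OrderDual.toDual m.1, toLex (m.2.1, m.2.2)))
      wellFounded_lt)
  obtain ⟨i', k', j'⟩ := m'
  obtain ⟨i, k, j⟩ := m
  rcases h with h | ⟨rfl, h | ⟨rfl, h⟩⟩
  · exact Prod.Lex.left _ _ h
  · exact Prod.Lex.right _ (Prod.Lex.left _ _ h)
  · exact Prod.Lex.right _ (Prod.Lex.right _ h)

lemma IsLm.mapDomain_shift {f : Fr K d} {m : MonIx d} (hf : IsLm f m) (γ : K →+* K)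
    (a l : ℕ) :
    IsLm (mapDomain (shift a l) (mapRange γ (map_zero γ) f)) (shift a l m) := by
  classical
  refine ⟨?_, fun m'' hm'' hne => ?_⟩
  · rw [mem_support_iff, mapDomain_apply (shift_injective a l), mapRange_apply,
      map_ne_zero]
    exact mem_support_iff.mp hf.1
  · obtain ⟨m', hm', rfl⟩ := Finset.mem_image.mp (mapDomain_support hm'')
    exact (hf.2 m' (support_mapRange hm') fun h => hne (h ▸ rfl)).shift a l

lemma shift_shift (a l a' l' : ℕ) (m : MonIx d) :
    shift a l (shift a' l' m) = shift (a' + a) (l' + l) m := by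
  simp only [shift, add_assoc]

lemma IsLm.phiMul_rhoMul_iterate (γφ γρ : K →+* K) {f : Fr K d} {m : MonIx d}
    (hf : IsLm f m) (a l : ℕ) :
    IsLm ((PhiMul γφ)^[a] ((RhoMul γρ)^[l] f)) (shift a l m) := by
  induction a with
  | zero =>
    induction l with
    | zero => exact hf
    | succ l ih =>
      rw [Function.iterate_succ_apply']
      have h := ih.mapDomain_shift γρ 0 1
      rwa [shift_shift] at h
  | succ a ih =>
    rw [Function.iterate_succ_apply']
    have h := ih.mapDomain_shift γφ 1 0
    rwa [shift_shift] at h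

lemma JanetBasis.phiMul_rhoMul_iterate_mem {γφ γρ : K →+* K} {N : Submodule K (Fr K d)}
    (J : JanetBasis γφ γρ d N) (ix : Fin J.r) (a l : ℕ) :
    (PhiMul γφ)^[a] ((RhoMul γρ)^[l] (J.b ix)) ∈ N :=
  J.span_eq.le (Submodule.subset_span ⟨a, l, J.b ix, Set.mem_range_self ix, rfl⟩)

lemma exists_lmb_eq_of_nVal_le {γφ γρ : K →+* K} {N : Submodule K (Fr K d)}
    (J : JanetBasis γφ γρ d N) {i : Fin d} {k : ℕ} (hk : nVal γφ γρ J i ≤ k) :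
    ∃ n ≤ k, ∃ ix, J.lmb ix = (i, n, 0) := by
  by_contra! h
  have hlt : ((k + 1 : ℕ) : ℕ∞) ≤ nVal γφ γρ J i := by
    refine le_sInf ?_
    rintro c ⟨n, rfl, ix, hix⟩
    exact Nat.cast_le.mpr (Nat.succ_le_of_lt (not_le.mp fun hn => h n hn ix hix))
  exact absurd (Nat.cast_le.mp (hlt.trans hk)) (Nat.not_succ_le_self k)

section Projection

variable {M : Type} [AddCommGroup M] [Module K M] (F S : M →+ M) (κb : Fin d → M)

def prMon (m : MonIx d) : M := F^[m.2.1] (S^[m.2.2] (κb m.1))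

lemma pr_eq_linearCombination (f : Fr K d) :
    pr F S κb f = linearCombination K (prMon F S κb) f := rfl

lemma pr_PhiMul {γφ : K →+* K} (hF : ∀ (x : K) (m : M), F (x • m) = γφ x • F m)
    (f : Fr K d) : pr F S κb (PhiMul γφ f) = F (pr F S κb f) := by
  rw [pr, PhiMul, sum_mapDomain_index (by simp) (fun _ _ _ => add_smul _ _ _),
    sum_mapRange_index (by simp), pr, map_finsuppSum]
  refine Finsupp.sum_congr fun m _ => ?_
  rw [hF, Function.iterate_succ_apply']

lemma pr_RhoMul {γρ : K →+* K} (hS : ∀ (x : K) (m : M), S (x • m) = γρ x • S m)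
    (hFS : ∀ m : M, F (S m) = S (F m)) (f : Fr K d) :
    pr F S κb (RhoMul γρ f) = S (pr F S κb f) := by
  rw [pr, RhoMul, sum_mapDomain_index (by simp) (fun _ _ _ => add_smul _ _ _),
    sum_mapRange_index (by simp), pr, map_finsuppSum]
  refine Finsupp.sum_congr fun m _ => ?_
  rw [hS, Function.iterate_succ_apply', Function.Commute.iterate_left hFS]

lemma pr_pelt {Dmat : Fin d → Fin d → (ℕ →₀ K)}
    (hact : ∀ i, S (κb i) = ∑ j : Fin d, (Dmat i j).sum fun k x => x • F^[k] (κb j))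
    (i : Fin d) : pr F S κb (pelt Dmat i) = 0 := by
  simp only [pr_eq_linearCombination, pelt, map_sub, map_sum, map_finsuppSum,
    linearCombination_single, one_smul, prMon, Function.iterate_zero, Function.iterate_one,
    id, hact, sub_self]

lemma pr_eq_zero_of_mem_DSpan {γφ γρ : K →+* K}
    (hF : ∀ (x : K) (m : M), F (x • m) = γφ x • F m)
    (hS : ∀ (x : K) (m : M), S (x • m) = γρ x • S m)
    (hFS : ∀ m : M, F (S m) = S (F m)) {s : Set (Fr K d)} (hs : ∀ g ∈ s, pr F S κb g = 0)
    {f : Fr K d} (hf : f ∈ DSpan γφ γρ s) : pr F S κb f = 0 := by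
  refine (Submodule.span_le (p := LinearMap.ker (linearCombination K (prMon F S κb)))).mpr
    ?_ hf
  rintro _ ⟨k, j, g, hg, rfl⟩
  change pr F S κb _ = 0
  rw [Function.Semiconj.iterate_right (pr_PhiMul F S κb hF) k,
    Function.Semiconj.iterate_right (pr_RhoMul F S κb hS hFS) j, hs g hg,
    iterate_map_zero, iterate_map_zero]

lemma mem_of_linearCombination_eq_zero {ι : Type*} {V : Submodule K M} {v : ι → M}
    {f : ι →₀ K} (h : linearCombination K v f = 0) {i : ι} (hi : f i ≠ 0)
    (hV : ∀ j ∈ f.support, j ≠ i → v j ∈ V) : v i ∈ V := by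
  classical
  rw [← single_add_erase i f, map_add, linearCombination_single,
    add_eq_zero_iff_eq_neg] at h
  refine (V.smul_mem_iff hi).mp (h ▸ V.neg_mem ?_)
  rw [linearCombination_apply]
  refine Submodule.sum_mem _ fun j hj => V.smul_mem _ ?_
  rw [support_erase, Finset.mem_erase] at hj
  exact hV j hj.2 hj.1

lemma prMon_mem_span_Wgen (hFS : ∀ m : M, F (S m) = S (F m)) {γφ γρ : K →+* K}
    {N : Submodule K (Fr K d)} (J : JanetBasis γφ γρ d N)
    (hN : ∀ f ∈ N, pr F S κb f = 0) (m : MonIx d) :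
    prMon F S κb m ∈
      Submodule.span K {x | ∃ w ∈ Wgen γφ γρ J, ∃ l : ℕ, x = S^[l] (pr F S κb w)} := by
  induction m using wellFounded_MLt.induction with
  | _ m ih =>
  obtain ⟨i, k, l⟩ := m
  rcases lt_or_ge (k : ℕ∞) (nVal γφ γρ J i) with hk | hk
  · refine Submodule.subset_span ⟨single (i, k, 0) 1, ⟨i, k, hk, rfl⟩, l, ?_⟩
    rw [pr_eq_linearCombination, linearCombination_single, one_smul]
    exact Function.Commute.iterate_iterate hFS k l (κb i)
  · obtain ⟨n, hnk, ix, hix⟩ := exists_lmb_eq_of_nVal_le J hk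
    have hlm := (J.b_lm ix).phiMul_rhoMul_iterate γφ γρ (k - n) l
    rw [hix, show shift (k - n) l ((i, n, 0) : MonIx d) = (i, k, l) by
      simp only [shift, Nat.add_sub_cancel' hnk, zero_add]] at hlm
    exact mem_of_linearCombination_eq_zero (hN _ (J.phiMul_rhoMul_iterate_mem ix _ _))
      (mem_support_iff.mp hlm.1) fun m hm hne => ih m (hlm.2 m hm hne)

end Projection

end JanetSetup

theorem pr_Wgen_generates_general
    {K : Type} [Field K] {d : ℕ} (γφ γρ : K →+* K)
    {M : Type} [AddCommGroup M] [Module K M]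
    -- `M` is a left `D`-module: `F` and `S` are the commuting semilinear actions
    -- of `φ` and `ρ` on `M`
    (F S : M →+ M)
    (hF : ∀ (x : K) (m : M), F (x • m) = γφ x • F m)
    (hS : ∀ (x : K) (m : M), S (x • m) = γρ x • S m)
    (hFS : ∀ m : M, F (S m) = S (F m))
    -- `M` is free of rank `d` as `K⟨φ⟩`-module with basis `κ̄_1, …, κ̄_d`
    (κb : Fin d → M)
    (hsp : Submodule.span K (Set.range fun p : Fin d × ℕ => F^[p.2] (κb p.1)) = ⊤)
    -- the `ρ`-action on the basis is given by the matrix `D ∈ Mat_{d×d}(K⟨φ⟩)`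
    (Dmat : Fin d → Fin d → (ℕ →₀ K))
    (hact : ∀ i, S (κb i) = ∑ j : Fin d, (Dmat i j).sum fun k x => x • F^[k] (κb j))
    -- `J` is a Janet basis of `⟨p_1, …, p_d⟩`
    (J : JanetBasis γφ γρ d (DSpan γφ γρ (Set.range (pelt Dmat))))
    :
    Submodule.span K
      {m : M | ∃ w ∈ Wgen γφ γρ J, ∃ l : ℕ, m = S^[l] (pr F S κb w)} = ⊤ := by
  have hN : ∀ f ∈ DSpan γφ γρ (Set.range (pelt Dmat)), pr F S κb f = 0 :=
    fun f => pr_eq_zero_of_mem_DSpan F S κb hF hS hFS (by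
      rintro _ ⟨i, rfl⟩
      exact pr_pelt F S κb hact i)
  rw [eq_top_iff, ← hsp, Submodule.span_le]
  rintro _ ⟨⟨i, k⟩, rfl⟩
  exact prMon_mem_span_Wgen F S κb hFS J hN (i, k, 0)

theorem pr_Wgen_generates
    {K : Type} [Field K] {d : ℕ} (γφ γρ : K →+* K)
    (hcomm : ∀ x : K, γφ (γρ x) = γρ (γφ x))
    {M : Type} [AddCommGroup M] [Module K M]
    -- `M` is a left `D`-module: `F` and `S` are the commuting semilinear actions
    -- of `φ` and `ρ` on `M`
    (F S : M →+ M)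
    (hF : ∀ (x : K) (m : M), F (x • m) = γφ x • F m)
    (hS : ∀ (x : K) (m : M), S (x • m) = γρ x • S m)
    (hFS : ∀ m : M, F (S m) = S (F m))
    -- `M` is free of rank `d` as `K⟨φ⟩`-module with basis `κ̄_1, …, κ̄_d`
    (κb : Fin d → M)
    (hli : LinearIndependent K fun p : Fin d × ℕ => F^[p.2] (κb p.1))
    (hsp : Submodule.span K (Set.range fun p : Fin d × ℕ => F^[p.2] (κb p.1)) = ⊤)
    -- the `ρ`-action on the basis is given by the matrix `D ∈ Mat_{d×d}(K⟨φ⟩)`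
    (Dmat : Fin d → Fin d → (ℕ →₀ K))
    (hact : ∀ i, S (κb i) = ∑ j : Fin d, (Dmat i j).sum fun k x => x • F^[k] (κb j))
    -- `J` is a Janet basis of `⟨p_1, …, p_d⟩`
    (J : JanetBasis γφ γρ d (DSpan γφ γρ (Set.range (pelt Dmat))))
    :
    Submodule.span K
      {m : M | ∃ w ∈ Wgen γφ γρ J, ∃ l : ℕ, m = S^[l] (pr F S κb w)} = ⊤ :=
  pr_Wgen_generates_general γφ γρ F S hF hS hFS κb hsp Dmat hact J
end
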